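/- arXiv:1709.06226 — 4 statements merged into one kernel-verified Lean document; each statement's English description precedes it below -/
import Mathlib

section
/- If X is a quasi-Polish space, then the lower powerspace A(X) with the lower Vietoris topology is quasi-Polish. -/
open Set Topology

/-- The lower powerspace: closed subsets of `X`. -/
def LowerPS (X : Type*) [TopologicalSpace X] : Type _ := {A : Set X // IsClosed A}

/-- Lower Vietoris topology, generated by the sets `◇U = {A | A ∩ U ≠ ∅}` for `U` open. -/
instance (X : Type*) [TopologicalSpace X] : TopologicalSpace (LowerPS X) :=
  .generateFrom {S | ∃ U : Set X, IsOpen U ∧ S = {A : LowerPS X | (A.1 ∩ U).Nonempty}}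

/-- The upper powerspace: compact saturated subsets of `X`
(saturated = intersection of all open neighborhoods). -/
def UpperPS (X : Type*) [TopologicalSpace X] : Type _ :=
  {K : Set X // IsCompact K ∧ K = ⋂₀ {U : Set X | IsOpen U ∧ K ⊆ U}}

/-- Upper Vietoris topology, generated by the sets `□U = {K | K ⊆ U}` for `U` open. -/
instance (X : Type*) [TopologicalSpace X] : TopologicalSpace (UpperPS X) :=
  .generateFrom {S | ∃ U : Set X, IsOpen U ∧ S = {K : UpperPS X | K.1 ⊆ U}}

/-- A `Π⁰₂` subset. -/
def IsPi02 {Y : Type*} [TopologicalSpace Y] (S : Set Y) : Prop :=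
  ∃ U V : ℕ → Set Y, (∀ i, IsOpen (U i)) ∧ (∀ i, IsOpen (V i)) ∧
    ∀ y, y ∈ S ↔ ∀ i, y ∈ U i → y ∈ V i

/-- The Scott topology on `P(ω)`, generated by the sets `{x | F ⊆ x}` for finite `F`. -/
instance : TopologicalSpace (Set ℕ) :=
  .generateFrom {S | ∃ F : Finset ℕ, S = {x : Set ℕ | ↑F ⊆ x}}

/-- A space is quasi-Polish iff it is homeomorphic to a `Π⁰₂` subspace of `P(ω)`
with the Scott topology. -/
def QuasiPolish (X : Type*) [TopologicalSpace X] : Prop :=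
  ∃ S : Set (Set ℕ), IsPi02 S ∧ Nonempty (X ≃ₜ S)

/-- Scott-open subsets of a preorder. -/
def IsScottOpen {α : Type*} [Preorder α] (U : Set α) : Prop :=
  (∀ ⦃a b : α⦄, a ≤ b → a ∈ U → b ∈ U) ∧
  ∀ d : Set α, d.Nonempty → DirectedOn (· ≤ ·) d → ∀ a : α, IsLUB d a → a ∈ U →
    (d ∩ U).Nonempty

/-- The Scott topology on a preorder. -/
def scottTop (α : Type*) [Preorder α] : TopologicalSpace α := .generateFrom {U | IsScottOpen U}

/-- The frame of open subsets of `X`, ordered by inclusion. -/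
def OpensT (X : Type*) [TopologicalSpace X] : Type _ := {U : Set X // IsOpen U}

instance (X : Type*) [TopologicalSpace X] : PartialOrder (OpensT X) :=
  inferInstanceAs (PartialOrder {U : Set X // IsOpen U})

/-- `O(X)` carries the Scott topology. -/
instance (X : Type*) [TopologicalSpace X] : TopologicalSpace (OpensT X) := scottTop (OpensT X)

/-- `□◇U` in `K(A(X))`. -/
def boxDia {X : Type*} [TopologicalSpace X] (U : Set X) : Set (UpperPS (LowerPS X)) :=
  {𝒦 | ∀ A ∈ 𝒦.1, ((A : LowerPS X).1 ∩ U).Nonempty}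

/-- `◇□U` in `A(K(X))`. -/
def diaBox {X : Type*} [TopologicalSpace X] (U : Set X) : Set (LowerPS (UpperPS X)) :=
  {𝒜 | ∃ K ∈ 𝒜.1, (K : UpperPS X).1 ⊆ U}

/-- A space is consonant iff every Scott-open family of opens containing `U` contains
a compact-saturated filter neighborhood `▽K` of `U`. -/
def Consonant (X : Type*) [TopologicalSpace X] : Prop :=
  ∀ H : Set (OpensT X), IsScottOpen H → ∀ U ∈ H,
    ∃ K : UpperPS X, K.1 ⊆ U.1 ∧ ∀ V : OpensT X, K.1 ⊆ V.1 → V ∈ H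

/-- A space is co-consonant. -/
def CoConsonant (Y : Type*) [TopologicalSpace Y] : Prop :=
  ∀ H : Set (OpensT Y), IsScottOpen H → ∀ U ∈ H,
    ∃ F : Finset (Set Y), (∀ A ∈ F, IsClosed A) ∧ (∀ A ∈ F, (U.1 ∩ A).Nonempty) ∧
      ∀ V : OpensT Y, (∀ A ∈ F, (V.1 ∩ A).Nonempty) → V ∈ H

/-!
Write `X ≅ S = {x ⊆ ℕ | ∀ i, x ∈ U i → x ∈ V i}` with `U i`, `V i` Scott open. A closed set
`A ⊆ S` is determined by the family of finite sets lying below some member of `A`, and a family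
`D` of finite sets arises in this way iff it is closed under subsets and has the extension
property: whenever `F ∈ D` and `F ∈ U i`, some `F' ⊇ F` in `D` lies in `V i`. Given such a `D`,
the point of `S` above `F₀ ∈ D` is the union of a chain `F₀ ⊆ F₁ ⊆ ⋯` in `D` along which every
requirement `i` is met infinitely often. Coding finite sets by naturals turns both conditions into
countably many implications between Scott-open conditions, so `A(S)` embeds into `P(ω)` as a
`Π⁰₂` subspace.
-/

open TopologicalSpace

namespace SetNat

lemma isTopologicalBasis_Ici_finset :
    IsTopologicalBasis (range fun F : Finset ℕ => Ici (F : Set ℕ)) where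
  exists_subset_inter := by
    rintro _ ⟨F, rfl⟩ _ ⟨G, rfl⟩ x hx
    have hFG : Ici (↑(F ∪ G) : Set ℕ) = Ici ↑F ∩ Ici ↑G := by simp [Ici_inter_Ici]
    exact ⟨_, ⟨F ∪ G, rfl⟩, hFG.ge hx, hFG.le⟩
  sUnion_eq := eq_univ_of_forall fun x => ⟨_, ⟨∅, rfl⟩, by simp⟩
  eq_generateFrom := congrArg generateFrom <| Set.ext fun _ => exists_congr fun _ => eq_comm

lemma isOpen_Ici_finset (F : Finset ℕ) : IsOpen (Ici (F : Set ℕ)) :=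
  isTopologicalBasis_Ici_finset.isOpen ⟨F, rfl⟩

lemma isOpen_setOf_mem (n : ℕ) : IsOpen {x : Set ℕ | n ∈ x} := by
  convert isOpen_Ici_finset {n}
  ext
  simp

lemma exists_finset_of_isOpen {W : Set (Set ℕ)} (hW : IsOpen W) {x : Set ℕ} (hx : x ∈ W) :
    ∃ F : Finset ℕ, ↑F ⊆ x ∧ Ici (F : Set ℕ) ⊆ W := by
  obtain ⟨_, ⟨F, rfl⟩, hxF, hFW⟩ := isTopologicalBasis_Ici_finset.isOpen_iff.1 hW x hx
  exact ⟨F, hxF, hFW⟩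

lemma isUpperSet_of_isOpen {W : Set (Set ℕ)} (hW : IsOpen W) : IsUpperSet W := by
  intro x y hxy hx
  obtain ⟨F, hFx, hFW⟩ := exists_finset_of_isOpen hW hx
  exact hFW (hFx.trans hxy)

lemma continuous_of_isOpen_setOf_mem {Z : Type*} [TopologicalSpace Z] {f : Z → Set ℕ}
    (hf : ∀ n, IsOpen {z | n ∈ f z}) : Continuous f := by
  refine continuous_generateFrom_iff.2 ?_
  rintro _ ⟨F, rfl⟩
  have : f ⁻¹' {x | ↑F ⊆ x} = ⋂ n ∈ F, {z | n ∈ f z} := by ext; simp [subset_def]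
  rw [this]
  exact isOpen_biInter_finset fun n _ => hf n

def finSubsets (A : Set (Set ℕ)) : Set (Finset ℕ) := {F | (A ∩ Ici (F : Set ℕ)).Nonempty}

def ofFinSubsets (D : Set (Finset ℕ)) : Set (Set ℕ) := {x | ∀ F : Finset ℕ, ↑F ⊆ x → F ∈ D}

def HasExtensions (U V : ℕ → Set (Set ℕ)) (D : Set (Finset ℕ)) : Prop :=
  ∀ F ∈ D, ∀ i, ↑F ∈ U i → ∃ F' ∈ D, F ⊆ F' ∧ ↑F' ∈ V i

lemma isLowerSet_finSubsets (A : Set (Set ℕ)) : IsLowerSet (finSubsets A) :=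
  fun _ _ hGF ⟨x, hxA, hFx⟩ => ⟨x, hxA, (Finset.coe_subset.2 hGF).trans hFx⟩

lemma hasExtensions_finSubsets {U V : ℕ → Set (Set ℕ)} (hU : ∀ i, IsUpperSet (U i))
    (hV : ∀ i, IsOpen (V i)) {A : Set (Set ℕ)} (hA : ∀ x ∈ A, ∀ i, x ∈ U i → x ∈ V i) :
    HasExtensions U V (finSubsets A) := by
  rintro F ⟨x, hxA, hFx⟩ i hFU
  obtain ⟨G, hGx, hGV⟩ := exists_finset_of_isOpen (hV i) (hA x hxA i (hU i hFx hFU))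
  refine ⟨F ∪ G, ⟨x, hxA, ?_⟩, Finset.subset_union_left, hGV ?_⟩
  · simpa using union_subset hFx hGx
  · simp

lemma inter_nonempty_iff_exists_finSubsets {A W : Set (Set ℕ)} (hW : IsOpen W) :
    (A ∩ W).Nonempty ↔ ∃ F ∈ finSubsets A, Ici (F : Set ℕ) ⊆ W := by
  constructor
  · rintro ⟨x, hxA, hxW⟩
    obtain ⟨F, hFx, hFW⟩ := exists_finset_of_isOpen hW hxW
    exact ⟨F, ⟨x, hxA, hFx⟩, hFW⟩
  · rintro ⟨F, ⟨x, hxA, hFx⟩, hFW⟩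
    exact ⟨x, hxA, hFW hFx⟩

lemma isClosed_ofFinSubsets (D : Set (Finset ℕ)) : IsClosed (ofFinSubsets D) := by
  have : ofFinSubsets D = ⋂ F ∈ Dᶜ, (Ici (F : Set ℕ))ᶜ := by
    ext x
    simp only [ofFinSubsets, mem_ofPred_eq, mem_iInter, mem_compl_iff, mem_Ici]
    exact forall_congr' fun F => not_imp_not.symm
  rw [this]
  exact isClosed_biInter fun F _ => (isOpen_Ici_finset F).isClosed_compl

lemma ofFinSubsets_finSubsets (A : Set (Set ℕ)) : ofFinSubsets (finSubsets A) = closure A := by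
  ext x
  rw [isTopologicalBasis_Ici_finset.mem_closure_iff]
  simp only [ofFinSubsets, finSubsets, mem_ofPred_eq, forall_mem_range, mem_Ici, inter_comm]

lemma exists_mem_ofFinSubsets {U V : ℕ → Set (Set ℕ)} (hU : ∀ i, IsOpen (U i))
    (hV : ∀ i, IsOpen (V i)) {D : Set (Finset ℕ)} (hD : IsLowerSet D)
    (hext : HasExtensions U V D) {F₀ : Finset ℕ} (hF₀ : F₀ ∈ D) :
    ∃ x ∈ ofFinSubsets D, (∀ i, x ∈ U i → x ∈ V i) ∧ ↑F₀ ⊆ x := by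
  have step : ∀ (F : Finset ℕ) (i : ℕ),
      ∃ F', F ⊆ F' ∧ (F ∈ D → F' ∈ D ∧ (↑F ∈ U i → ↑F' ∈ V i)) := by
    intro F i
    by_cases h : F ∈ D ∧ ↑F ∈ U i
    · obtain ⟨F', hF'D, hFF', hF'V⟩ := hext F h.1 i h.2
      exact ⟨F', hFF', fun _ => ⟨hF'D, fun _ => hF'V⟩⟩
    · exact ⟨F, subset_rfl, fun hF => ⟨hF, fun hFU => (h ⟨hF, hFU⟩).elim⟩⟩
  choose next hle hnext using step
  -- stage `n + 1` serves requirement `n.unpair.1`, so each requirement is served infinitely often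
  let s : ℕ → Finset ℕ := Nat.rec (motive := fun _ => Finset ℕ) F₀ fun n F => next F n.unpair.1
  have hs_mono : Monotone s := monotone_nat_of_le_succ fun n => hle _ _
  have hs_mem : ∀ n, s n ∈ D := fun n => Nat.rec hF₀ (fun n ih => (hnext _ _ ih).1) n
  set x : Set ℕ := ⋃ n, ↑(s n)
  have hs_sub : ∀ n, (s n : Set ℕ) ⊆ x := fun n =>
    subset_iUnion (fun n => (s n : Set ℕ)) n
  have hfin : ∀ G : Finset ℕ, ↑G ⊆ x → ∃ n, G ⊆ s n := fun G hG => by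
    have hdir : Directed (· ⊆ ·) fun n => (s n : Set ℕ) :=
      Monotone.directed_le fun _ _ h => Finset.coe_subset.2 (hs_mono h)
    simpa using hdir.exists_mem_subset_of_finset_subset_biUnion hG
  refine ⟨x, fun G hG => ?_, fun i hxU => ?_, hs_sub 0⟩
  · obtain ⟨n, hn⟩ := hfin G hG
    exact hD hn (hs_mem n)
  · obtain ⟨F, hFx, hFU⟩ := exists_finset_of_isOpen (hU i) hxU
    obtain ⟨N, hFN⟩ := hfin F hFx
    set m := Nat.pair i N
    have hmU : ↑(s m) ∈ U i :=
      hFU (Finset.coe_subset.2 (hFN.trans (hs_mono (Nat.right_le_pair i N))))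
    have hsucc : s (m + 1) = next (s m) i := by simp [s, m, Nat.unpair_pair]
    have hV_succ : ↑(s (m + 1)) ∈ V i := hsucc ▸ (hnext _ _ (hs_mem m)).2 hmU
    exact isUpperSet_of_isOpen (hV i) (hs_sub (m + 1)) hV_succ

lemma finSubsets_inter_ofFinSubsets {S : Set (Set ℕ)} {U V : ℕ → Set (Set ℕ)}
    (hU : ∀ i, IsOpen (U i)) (hV : ∀ i, IsOpen (V i)) (hS : ∀ x, x ∈ S ↔ ∀ i, x ∈ U i → x ∈ V i)
    {D : Set (Finset ℕ)} (hD : IsLowerSet D) (hext : HasExtensions U V D) :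
    finSubsets (S ∩ ofFinSubsets D) = D := by
  refine Subset.antisymm (fun F ⟨x, ⟨_, hxD⟩, hFx⟩ => hxD F hFx) fun F hF => ?_
  obtain ⟨x, hxD, hxS, hFx⟩ := exists_mem_ofFinSubsets hU hV hD hext hF
  exact ⟨x, ⟨(hS x).2 hxS, hxD⟩, hFx⟩

end SetNat

lemma isPi02_setOf_forall_imp {Y ι : Type*} [TopologicalSpace Y] [Countable ι]
    {U V : ι → Set Y} (hU : ∀ i, IsOpen (U i)) (hV : ∀ i, IsOpen (V i)) :
    IsPi02 {y | ∀ i, y ∈ U i → y ∈ V i} := by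
  rcases isEmpty_or_nonempty ι with _ | _
  · exact ⟨fun _ => univ, fun _ => univ, fun _ => isOpen_univ, fun _ => isOpen_univ, by simp⟩
  · obtain ⟨s, hs⟩ := exists_surjective_nat ι
    exact ⟨U ∘ s, V ∘ s, fun n => hU (s n), fun n => hV (s n),
      fun y => hs.forall (p := fun i => y ∈ U i → y ∈ V i)⟩

lemma IsPi02.inter {Y : Type*} [TopologicalSpace Y] {S T : Set Y} (hS : IsPi02 S)
    (hT : IsPi02 T) : IsPi02 (S ∩ T) := by
  obtain ⟨U, V, hU, hV, hUV⟩ := hS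
  obtain ⟨U', V', hU', hV', hUV'⟩ := hT
  convert isPi02_setOf_forall_imp (U := Sum.elim U U') (V := Sum.elim V V')
    (Sum.forall.2 ⟨hU, hU'⟩) (Sum.forall.2 ⟨hV, hV'⟩) using 1
  ext y
  simp [Sum.forall, hUV, hUV']

lemma QuasiPolish.of_homeomorph {X Y : Type*} [TopologicalSpace X] [TopologicalSpace Y]
    (e : X ≃ₜ Y) (hY : QuasiPolish Y) : QuasiPolish X := by
  obtain ⟨S, hS, ⟨e'⟩⟩ := hY
  exact ⟨S, hS, ⟨e.trans e'⟩⟩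

lemma QuasiPolish.of_isEmbedding {X : Type*} [TopologicalSpace X] {f : X → Set ℕ}
    (hf : IsEmbedding f) (hrange : IsPi02 (range f)) : QuasiPolish X :=
  ⟨_, hrange, ⟨hf.toHomeomorph⟩⟩

namespace LowerPS

variable {X Y Z : Type*} [TopologicalSpace X] [TopologicalSpace Y] [TopologicalSpace Z]

lemma isOpen_setOf_inter_nonempty {U : Set X} (hU : IsOpen U) :
    IsOpen {A : LowerPS X | (A.1 ∩ U).Nonempty} :=
  .basic _ ⟨U, hU, rfl⟩

lemma continuous_of_isOpen {f : Z → LowerPS X}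
    (hf : ∀ U : Set X, IsOpen U → IsOpen {z | ((f z).1 ∩ U).Nonempty}) : Continuous f := by
  refine continuous_generateFrom_iff.2 ?_
  rintro _ ⟨U, hU, rfl⟩
  exact hf U hU

lemma isInducing_of_continuous {f : LowerPS X → Y} (hf : Continuous f)
    (h : ∀ U : Set X, IsOpen U →
      ∃ W : Set Y, IsOpen W ∧ f ⁻¹' W = {A : LowerPS X | (A.1 ∩ U).Nonempty}) :
    IsInducing f := by
  refine ⟨le_antisymm hf.le_induced (le_generateFrom ?_)⟩
  rintro _ ⟨U, hU, rfl⟩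
  obtain ⟨W, hW, hfW⟩ := h U hU
  exact isOpen_induced_iff.2 ⟨W, hW, hfW⟩

def image (f : X → Y) (hf : IsClosedMap f) (A : LowerPS X) : LowerPS Y :=
  ⟨f '' A.1, hf _ A.2⟩

lemma continuous_image {f : X → Y} (hf : Continuous f) (hf' : IsClosedMap f) :
    Continuous (image f hf') :=
  continuous_of_isOpen fun U hU => by
    simpa [image, image_inter_nonempty_iff] using isOpen_setOf_inter_nonempty (hU.preimage hf)

end LowerPS

def Homeomorph.lowerPSCongr {X Y : Type*} [TopologicalSpace X] [TopologicalSpace Y]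
    (e : X ≃ₜ Y) : LowerPS X ≃ₜ LowerPS Y where
  toFun := LowerPS.image e e.isClosedMap
  invFun := LowerPS.image e.symm e.symm.isClosedMap
  left_inv A := Subtype.ext (e.toEquiv.symm_image_image A.1)
  right_inv B := Subtype.ext (e.toEquiv.image_symm_image B.1)
  continuous_toFun := LowerPS.continuous_image e.continuous e.isClosedMap
  continuous_invFun := LowerPS.continuous_image e.symm.continuous e.symm.isClosedMap

namespace LowerPS

open SetNat

variable {S : Set (Set ℕ)} {U V : ℕ → Set (Set ℕ)}

def code (A : LowerPS S) : Set ℕ :=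
  (Denumerable.eqv (Finset ℕ)).symm ⁻¹' finSubsets (Subtype.val '' A.1)

def decode (y : Set ℕ) : LowerPS S :=
  ⟨Subtype.val ⁻¹' ofFinSubsets (Denumerable.eqv (Finset ℕ) ⁻¹' y),
    (isClosed_ofFinSubsets _).preimage continuous_subtype_val⟩

def codes (U V : ℕ → Set (Set ℕ)) : Set (Set ℕ) :=
  {y | IsLowerSet (Denumerable.eqv (Finset ℕ) ⁻¹' y) ∧
    HasExtensions U V (Denumerable.eqv (Finset ℕ) ⁻¹' y)}

lemma decode_code (A : LowerPS S) : decode (code A) = A := by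
  refine Subtype.ext ?_
  simp only [decode, code, Equiv.preimage_symm_preimage, ofFinSubsets_finSubsets,
    ← IsInducing.subtypeVal.closure_eq_preimage_closure_image, A.2.closure_eq]

lemma code_decode (hU : ∀ i, IsOpen (U i)) (hV : ∀ i, IsOpen (V i))
    (hS : ∀ x, x ∈ S ↔ ∀ i, x ∈ U i → x ∈ V i) {y : Set ℕ} (hy : y ∈ codes U V) :
    code (decode (S := S) y) = y := by
  simp only [code, decode, Subtype.image_preimage_coe,
    finSubsets_inter_ofFinSubsets hU hV hS hy.1 hy.2, Equiv.symm_preimage_preimage]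

lemma mem_code_iff {A : LowerPS S} {F : Finset ℕ} :
    Denumerable.eqv (Finset ℕ) F ∈ code A ↔ (A.1 ∩ Subtype.val ⁻¹' Ici (F : Set ℕ)).Nonempty := by
  simp [code, finSubsets, image_inter_nonempty_iff]

lemma continuous_code : Continuous (code (S := S)) := by
  refine continuous_of_isOpen_setOf_mem fun n => ?_
  obtain ⟨F, rfl⟩ := (Denumerable.eqv (Finset ℕ)).surjective n
  simp only [mem_code_iff]
  exact isOpen_setOf_inter_nonempty ((isOpen_Ici_finset F).preimage continuous_subtype_val)

lemma isEmbedding_code : IsEmbedding (code (S := S)) := by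
  refine ⟨isInducing_of_continuous continuous_code fun U₀ hU₀ => ?_,
    Function.LeftInverse.injective decode_code⟩
  obtain ⟨W, hW, rfl⟩ := isOpen_induced_iff.1 hU₀
  refine ⟨⋃ F ∈ {F : Finset ℕ | Ici (F : Set ℕ) ⊆ W}, {y | Denumerable.eqv (Finset ℕ) F ∈ y},
    isOpen_biUnion fun F _ => isOpen_setOf_mem _, ?_⟩
  ext A
  simp only [mem_preimage, mem_iUnion, mem_ofPred_eq, exists_prop, ← image_inter_nonempty_iff,
    inter_nonempty_iff_exists_finSubsets hW, code, Equiv.symm_apply_apply]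
  exact exists_congr fun F => and_comm

lemma range_code (hU : ∀ i, IsOpen (U i)) (hV : ∀ i, IsOpen (V i))
    (hS : ∀ x, x ∈ S ↔ ∀ i, x ∈ U i → x ∈ V i) : range (code (S := S)) = codes U V := by
  refine Subset.antisymm ?_ fun y hy => ⟨decode y, code_decode hU hV hS hy⟩
  rintro _ ⟨A, rfl⟩
  simp only [codes, code, Equiv.preimage_symm_preimage, mem_ofPred_eq]
  refine ⟨isLowerSet_finSubsets _,
    hasExtensions_finSubsets (fun i => isUpperSet_of_isOpen (hU i)) hV ?_⟩
  rintro _ ⟨x, -, rfl⟩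
  exact (hS x).1 x.2

lemma isPi02_codes (U V : ℕ → Set (Set ℕ)) : IsPi02 (codes U V) := by
  let e := Denumerable.eqv (Finset ℕ)
  have hlower : IsPi02 {y : Set ℕ | IsLowerSet (e ⁻¹' y)} := by
    convert isPi02_setOf_forall_imp (ι := Finset ℕ × Finset ℕ)
      (U := fun p => {y | p.2 ⊆ p.1 ∧ e p.1 ∈ y}) (V := fun p => {y | e p.2 ∈ y})
      (fun p => isOpen_const.inter (isOpen_setOf_mem _)) (fun p => isOpen_setOf_mem _) using 1
    ext y
    exact ⟨fun h p hp => h hp.1 hp.2, fun h F G hGF hF => h (F, G) ⟨hGF, hF⟩⟩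
  have hext : IsPi02 {y : Set ℕ | HasExtensions U V (e ⁻¹' y)} := by
    convert isPi02_setOf_forall_imp (ι := Finset ℕ × ℕ)
      (U := fun p => {y | e p.1 ∈ y ∧ ↑p.1 ∈ U p.2})
      (V := fun p => ⋃ F' ∈ {F' : Finset ℕ | p.1 ⊆ F' ∧ ↑F' ∈ V p.2}, {y | e F' ∈ y})
      (fun p => (isOpen_setOf_mem _).inter isOpen_const)
      (fun p => isOpen_biUnion fun _ _ => isOpen_setOf_mem _) using 1
    ext y
    simp only [HasExtensions, mem_preimage, mem_ofPred_eq, mem_iUnion, exists_prop, Prod.forall,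
      and_imp]
    exact ⟨fun h F i hF hFU => (h F hF i hFU).imp fun F' hF' => ⟨hF'.2, hF'.1⟩,
      fun h F hF i hFU => (h F i hF hFU).imp fun F' hF' => ⟨hF'.2, hF'.1⟩⟩
  exact hlower.inter hext

end LowerPS

/-- The lower powerspace of a quasi-Polish space is quasi-Polish. -/
theorem lowerPS_quasiPolish (X : Type*) [TopologicalSpace X] (h : QuasiPolish X) :
    QuasiPolish (LowerPS X) := by
  obtain ⟨S, ⟨U, V, hU, hV, hS⟩, ⟨e⟩⟩ := h
  refine QuasiPolish.of_homeomorph (Homeomorph.lowerPSCongr e) ?_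
  refine QuasiPolish.of_isEmbedding LowerPS.isEmbedding_code ?_
  rw [LowerPS.range_code hU hV hS]
  exact LowerPS.isPi02_codes U V
end

section
/- For any topological space X, the map σ : A(K(X)) → K(A(X)) defined by σ(𝒜) = {A ∈ A(X) | ∀K ∈ 𝒜, A ∩ K ≠ ∅} is well-defined (each σ(𝒜) is compact saturated in A(X)), satisfies σ⁻¹(□◇U) = ◇□U for every open U ⊆ X, and is a topological embedding. -/
/-!
For `U` open, `σ(𝒜) ⊆ ◇U` holds iff some `K ∈ 𝒜` lies in `U`; this is the preimage identity
`σ⁻¹(□◇U) = ◇□U`. A cover of `σ(𝒜)` by sets `◇Uᵢ` is the inclusion `σ(𝒜) ⊆ ◇(⋃ Uᵢ)`, so some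
`K ∈ 𝒜` lies in `⋃ Uᵢ`, and compactness of `K` gives a finite subcover: by Alexander's subbasis
theorem `σ(𝒜)` is compact. The subbasis `{◇U}` of `A(X)` is closed under finite unions, so by
compactness the sets `□◇U` alone generate the topology of `K(A(X))`, and σ is continuous. The
sets `□U` form a basis of `K(X)`, so the sets `◇□U` generate the topology of `A(K(X))`, and σ
is inducing; it is an embedding because `A(K(X))` is T₀.
-/

open Set Topology

open TopologicalSpace

namespace LowerPS

variable {Y : Type*} [TopologicalSpace Y]

def dia (V : Set Y) : Set (LowerPS Y) := {A | (A.1 ∩ V).Nonempty}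

lemma isOpen_dia {V : Set Y} (hV : IsOpen V) : IsOpen (dia V) :=
  isOpen_generateFrom_of_mem ⟨V, hV, rfl⟩

lemma dia_empty : dia (∅ : Set Y) = ∅ := by
  simp [dia]

lemma dia_union (V W : Set Y) : dia (V ∪ W) = dia V ∪ dia W := by
  ext A
  simp [dia, inter_union_distrib_left]

lemma dia_sUnion (T : Set (Set Y)) : dia (⋃₀ T) = ⋃ t ∈ T, dia t := by
  ext A
  simp [dia, sUnion_eq_biUnion, inter_iUnion₂]

instance : T0Space (LowerPS Y) where
  t0 A B hAB := by
    have subset_of_inseparable : ∀ A B : LowerPS Y, Inseparable A B → A.1 ⊆ B.1 := by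
      intro A B h x hxA
      by_contra hxB
      obtain ⟨y, hyB, hyB'⟩ := (h.mem_open_iff (isOpen_dia B.2.isOpen_compl)).1 ⟨x, hxA, hxB⟩
      exact hyB' hyB
    exact Subtype.ext (subset_antisymm (subset_of_inseparable A B hAB)
      (subset_of_inseparable B A hAB.symm))

lemma eq_generateFrom_dia {B : Set (Set Y)} (hB : IsTopologicalBasis B) :
    instTopologicalSpaceLowerPS Y = generateFrom (dia '' B) := by
  refine le_antisymm (le_generateFrom ?_) (le_generateFrom (t := generateFrom (dia '' B)) ?_)
  · rintro _ ⟨b, hb, rfl⟩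
    exact isOpen_dia (hB.isOpen hb)
  · rintro _ ⟨U, hU, rfl⟩
    obtain ⟨T, hTB, rfl⟩ := hB.open_eq_sUnion hU
    let := generateFrom (dia '' B)
    change IsOpen (dia (⋃₀ T))
    rw [dia_sUnion]
    exact isOpen_biUnion fun t ht => isOpen_generateFrom_of_mem ⟨t, hTB ht, rfl⟩

end LowerPS

lemma supClosed_finite_sInter {Y : Type*} {S : Set (Set Y)} (hS : SupClosed S) :
    SupClosed ((fun F => ⋂₀ F) '' {F : Set (Set Y) | F.Finite ∧ F ⊆ S}) := by
  rintro _ ⟨F, ⟨hF, hFS⟩, rfl⟩ _ ⟨G, ⟨hG, hGS⟩, rfl⟩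
  refine ⟨(fun p => p.1 ∪ p.2) '' F ×ˢ G, ⟨(hF.prod hG).image _, ?_⟩, ?_⟩
  · rintro _ ⟨p, ⟨hp₁, hp₂⟩, rfl⟩
    exact hS (hFS hp₁) (hGS hp₂)
  · simp only [sInter_image, sup_eq_union, sInter_union_sInter]

lemma IsCompact.exists_finite_sInter_subset_of_supClosed {Y : Type*} [TopologicalSpace Y]
    {S : Set (Set Y)} (hY : ‹TopologicalSpace Y› = generateFrom S) (hS : SupClosed S) (hS₀ : ∅ ∈ S)
    {K W : Set Y} (hK : IsCompact K) (hW : IsOpen W) (hKW : K ⊆ W) :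
    ∃ F : Set (Set Y), F.Finite ∧ F ⊆ S ∧ K ⊆ ⋂₀ F ∧ ⋂₀ F ⊆ W := by
  have hB := isTopologicalBasis_of_subbasis hY
  obtain ⟨T, hTB, rfl⟩ := hB.open_eq_sUnion hW
  obtain ⟨Q, hQT, hQ, hKQ⟩ := hK.elim_finite_subcover_image (c := id)
    (fun t ht => hB.isOpen (hTB ht)) (by simpa [← sUnion_eq_biUnion] using hKW)
  -- a finite union of finite intersections of members of `S` is again such an intersection
  obtain ⟨F, ⟨hF, hFS⟩, hFQ⟩ : ⋃₀ Q ∈ (fun F => ⋂₀ F) '' {F : Set (Set Y) | F.Finite ∧ F ⊆ S} :=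
    (supClosed_finite_sInter hS).sSup_mem hQ ⟨{∅}, ⟨finite_singleton _, by simpa⟩, by simp⟩
      (hQT.trans hTB)
  refine ⟨F, hF, hFS, ?_⟩
  rw [show ⋂₀ F = ⋃₀ Q from hFQ]
  exact ⟨by simpa [sUnion_eq_biUnion] using hKQ, sUnion_mono hQT⟩

namespace UpperPS

variable {Y : Type*} [TopologicalSpace Y]

def box (U : Set Y) : Set (UpperPS Y) := {K | K.1 ⊆ U}

lemma isOpen_box {U : Set Y} (hU : IsOpen U) : IsOpen (box U) :=
  isOpen_generateFrom_of_mem ⟨U, hU, rfl⟩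

lemma box_sInter (F : Set (Set Y)) : box (⋂₀ F) = ⋂ s ∈ F, box s := by
  ext K
  simp [box]

lemma isTopologicalBasis_box : IsTopologicalBasis (box '' {U : Set Y | IsOpen U}) := by
  refine isTopologicalBasis_of_subbasis_of_finiteInter ?_ ⟨⟨univ, isOpen_univ, ?_⟩, ?_⟩
  · exact congrArg generateFrom (ext fun _ => exists_congr fun _ => and_congr_right' eq_comm)
  · exact eq_univ_of_forall fun K => subset_univ _
  · rintro _ ⟨U, hU, rfl⟩ _ ⟨V, hV, rfl⟩
    exact ⟨U ∩ V, hU.inter hV, by ext; simp [box]⟩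

lemma eq_generateFrom_box {S : Set (Set Y)} (hY : ‹TopologicalSpace Y› = generateFrom S)
    (hS : SupClosed S) (hS₀ : ∅ ∈ S) :
    instTopologicalSpaceUpperPS Y = generateFrom (box '' S) := by
  have hSopen : ∀ s ∈ S, IsOpen s := fun s hs => hY ▸ isOpen_generateFrom_of_mem hs
  refine le_antisymm (le_generateFrom ?_) (le_generateFrom (t := generateFrom (box '' S)) ?_)
  · rintro _ ⟨s, hs, rfl⟩
    exact isOpen_box (hSopen s hs)
  · rintro _ ⟨W, hW, rfl⟩
    let := generateFrom (box '' S)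
    refine isOpen_iff_forall_mem_open.2 fun K hKW => ?_
    obtain ⟨F, hF, hFS, hKF, hFW⟩ :=
      K.2.1.exists_finite_sInter_subset_of_supClosed hY hS hS₀ hW hKW
    refine ⟨box (⋂₀ F), fun L hL => hL.trans hFW, ?_, hKF⟩
    rw [box_sInter]
    exact hF.isOpen_biInter fun s hs => isOpen_generateFrom_of_mem ⟨s, hFS hs, rfl⟩

end UpperPS

section Sigma

open LowerPS UpperPS

variable {X : Type*} [TopologicalSpace X]

def sigmaSet (𝒜 : LowerPS (UpperPS X)) : Set (LowerPS X) :=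
  {A | ∀ K ∈ 𝒜.1, (A.1 ∩ (K : UpperPS X).1).Nonempty}

lemma sigmaSet_subset_dia_iff {𝒜 : LowerPS (UpperPS X)} {U : Set X} (hU : IsOpen U) :
    sigmaSet 𝒜 ⊆ dia U ↔ 𝒜 ∈ dia (box U) := by
  refine ⟨fun h => ?_, fun ⟨K, hK𝒜, hKU⟩ A hA => ?_⟩
  · by_contra h𝒜
    -- otherwise the closed set `Uᶜ` meets every member of `𝒜`
    have hUc : (⟨Uᶜ, hU.isClosed_compl⟩ : LowerPS X) ∈ sigmaSet 𝒜 := fun K hK =>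
      let ⟨x, hxK, hxU⟩ := not_subset.1 fun hKU => h𝒜 ⟨K, hK, hKU⟩
      ⟨x, hxU, hxK⟩
    obtain ⟨x, hxUc, hxU⟩ := h hUc
    exact hxUc hxU
  · obtain ⟨x, hxA, hxK⟩ := hA K hK𝒜
    exact ⟨x, hxA, hKU hxK⟩

lemma sigmaSet_eq_sInter_isOpen (𝒜 : LowerPS (UpperPS X)) :
    sigmaSet 𝒜 = ⋂₀ {𝒰 : Set (LowerPS X) | IsOpen 𝒰 ∧ sigmaSet 𝒜 ⊆ 𝒰} := by
  refine Subset.antisymm (fun A hA 𝒰 h𝒰 => h𝒰.2 hA) fun B hB => ?_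
  by_contra hB𝒜
  obtain ⟨K, hK, hBK⟩ : ∃ K ∈ 𝒜.1, ¬(B.1 ∩ (K : UpperPS X).1).Nonempty := by
    simpa [sigmaSet] using hB𝒜
  have hKB : 𝒜 ∈ dia (box B.1ᶜ) :=
    ⟨K, hK, fun x hxK hxB => hBK ⟨x, hxB, hxK⟩⟩
  obtain ⟨x, hxB, hxBc⟩ := hB _ ⟨isOpen_dia B.2.isOpen_compl,
    (sigmaSet_subset_dia_iff B.2.isOpen_compl).2 hKB⟩
  exact hxBc hxB

lemma isCompact_sigmaSet (𝒜 : LowerPS (UpperPS X)) : IsCompact (sigmaSet 𝒜) := by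
  refine isCompact_generateFrom rfl fun P hP hcover => ?_
  set G := {U : Set X | IsOpen U ∧ dia U ∈ P}
  have hdia : sigmaSet 𝒜 ⊆ dia (⋃₀ G) := by
    intro A hA
    obtain ⟨_, hp, hAp⟩ := hcover hA
    obtain ⟨U, hU, rfl⟩ := hP hp
    obtain ⟨x, hxA, hxU⟩ := hAp
    exact ⟨x, hxA, U, ⟨hU, hp⟩, hxU⟩
  obtain ⟨K, hK𝒜, hKG⟩ :=
    (sigmaSet_subset_dia_iff (isOpen_sUnion fun U hU => hU.1)).1 hdia
  obtain ⟨G', hG'G, hG', hKG'⟩ := K.2.1.elim_finite_subcover_image (c := id)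
    (fun U (hU : U ∈ G) => hU.1) (sUnion_eq_biUnion ▸ hKG)
  refine ⟨dia '' G', image_subset_iff.2 fun U hU => (hG'G hU).2, hG'.image _, ?_⟩
  refine ((sigmaSet_subset_dia_iff (isOpen_sUnion fun U hU => (hG'G hU).1)).2
    ⟨K, hK𝒜, (sUnion_eq_biUnion (s := G')).symm ▸ hKG'⟩).trans ?_
  rw [dia_sUnion, sUnion_image]

def sigmaMap (𝒜 : LowerPS (UpperPS X)) : UpperPS (LowerPS X) :=
  ⟨sigmaSet 𝒜, isCompact_sigmaSet 𝒜, sigmaSet_eq_sInter_isOpen 𝒜⟩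

lemma preimage_sigmaMap_box_dia {U : Set X} (hU : IsOpen U) :
    sigmaMap ⁻¹' box (dia U) = dia (box U) :=
  ext fun _ => sigmaSet_subset_dia_iff hU

lemma continuous_sigmaMap : Continuous (sigmaMap (X := X)) := by
  have hdia : SupClosed (dia '' {U : Set X | IsOpen U}) := by
    rintro _ ⟨U, hU, rfl⟩ _ ⟨V, hV, rfl⟩
    exact ⟨U ∪ V, hU.union hV, dia_union U V⟩
  rw [eq_generateFrom_box (eq_generateFrom_dia isTopologicalBasis_opens) hdia
    ⟨∅, isOpen_empty, dia_empty⟩, continuous_generateFrom_iff]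
  rintro _ ⟨_, ⟨U, hU, rfl⟩, rfl⟩
  rw [preimage_sigmaMap_box_dia hU]
  exact isOpen_dia (isOpen_box hU)

lemma isInducing_sigmaMap : IsInducing (sigmaMap (X := X)) := by
  refine ⟨le_antisymm (continuous_iff_le_induced.1 continuous_sigmaMap) ?_⟩
  rw [eq_generateFrom_dia isTopologicalBasis_box]
  refine le_generateFrom ?_
  rintro _ ⟨_, ⟨U, hU, rfl⟩, rfl⟩
  rw [← preimage_sigmaMap_box_dia hU]
  exact isOpen_induced (isOpen_box (isOpen_dia hU))

end Sigma

/-- The map `σ : A(K(X)) → K(A(X))`, `σ(𝒜) = {A closed | ∀ K ∈ 𝒜, A ∩ K ≠ ∅}`, is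
well-defined, satisfies `σ⁻¹(□◇U) = ◇□U` for all open `U`, and is a topological
embedding. -/
theorem sigma_embedding (X : Type*) [TopologicalSpace X] :
    ∃ σ : LowerPS (UpperPS X) → UpperPS (LowerPS X),
      (∀ 𝒜, (σ 𝒜).1 = {A : LowerPS X | ∀ K ∈ 𝒜.1, (A.1 ∩ (K : UpperPS X).1).Nonempty}) ∧
      (∀ U : Set X, IsOpen U → σ ⁻¹' boxDia U = diaBox U) ∧
      Topology.IsEmbedding σ :=
  ⟨sigmaMap, fun _ => rfl, fun _ => preimage_sigmaMap_box_dia, isInducing_sigmaMap.isEmbedding⟩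
end

section
/- For any topological space X, the map τ : K(A(X)) → A(K(X)) defined by τ(𝒦) = {K ∈ K(X) | ∀A ∈ 𝒦, A ∩ K ≠ ∅} is well-defined (each τ(𝒦) is closed in K(X)), and τ⁻¹(◇□U) ⊆ □◇U for every open U ⊆ X. -/
open Set Topology

/-! The complement of `τ(𝒦)` is the union of the basic opens `□(X \ A)`, `A ∈ 𝒦`, so `τ(𝒦)` is
closed; and a `K ∈ τ(𝒦)` with `K ⊆ U` meets every `A ∈ 𝒦` inside `U`. -/

namespace UpperPS

variable {X : Type*} [TopologicalSpace X]

theorem isOpen_setOf_subset {U : Set X} (hU : IsOpen U) : IsOpen {K : UpperPS X | K.1 ⊆ U} :=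
  .basic _ ⟨U, hU, rfl⟩

theorem isClosed_setOf_inter_nonempty {A : Set X} (hA : IsClosed A) :
    IsClosed {K : UpperPS X | (A ∩ K.1).Nonempty} := by
  have h : {K : UpperPS X | (A ∩ K.1).Nonempty} = {K : UpperPS X | K.1 ⊆ Aᶜ}ᶜ := by
    ext K
    simp [subset_compl_iff_disjoint_left, not_disjoint_iff_nonempty_inter]
  rw [h, isClosed_compl_iff]
  exact isOpen_setOf_subset hA.isOpen_compl

theorem isClosed_setOf_forall_inter_nonempty (𝒜 : Set (LowerPS X)) :
    IsClosed {K : UpperPS X | ∀ A ∈ 𝒜, (A.1 ∩ K.1).Nonempty} := by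
  simpa only [ofPred_forall] using isClosed_biInter fun A _ => isClosed_setOf_inter_nonempty A.2

end UpperPS

def tau {X : Type*} [TopologicalSpace X] (𝒦 : UpperPS (LowerPS X)) : LowerPS (UpperPS X) :=
  ⟨{K | ∀ A ∈ 𝒦.1, ((A : LowerPS X).1 ∩ K.1).Nonempty},
    UpperPS.isClosed_setOf_forall_inter_nonempty 𝒦.1⟩

theorem tau_preimage_diaBox_subset {X : Type*} [TopologicalSpace X] (U : Set X) :
    tau ⁻¹' diaBox U ⊆ boxDia U := by
  rintro 𝒦 ⟨K, hK𝒦, hKU⟩ A hA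
  obtain ⟨x, hxA, hxK⟩ := hK𝒦 A hA
  exact ⟨x, hxA, hKU hxK⟩

/-- The map `τ : K(A(X)) → A(K(X))`, `τ(𝒦) = {K compact saturated | ∀ A ∈ 𝒦, A ∩ K ≠ ∅}`,
is well-defined, and `τ⁻¹(◇□U) ⊆ □◇U` for every open `U`. -/
theorem tau_wellDefined (X : Type*) [TopologicalSpace X] :
    ∃ τ : UpperPS (LowerPS X) → LowerPS (UpperPS X),
      (∀ 𝒦, (τ 𝒦).1 = {K : UpperPS X | ∀ A ∈ 𝒦.1, ((A : LowerPS X).1 ∩ K.1).Nonempty}) ∧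
      ∀ U : Set X, IsOpen U → τ ⁻¹' diaBox U ⊆ boxDia U := by
  exact ⟨tau, fun _ => rfl, fun U _ => tau_preimage_diaBox_subset U⟩
end

section
/- For every topological space X, the map φ : K(A(X)) → O(O(X)) defined by φ(𝒦) = {U open | every A ∈ 𝒦 meets U} and the map ψ : O(O(X)) → K(A(X)) defined by ψ(ℋ) = ⋂_{U ∈ ℋ} ◇U are mutually inverse order isomorphisms between K(A(X)) (ordered by reverse inclusion) and the lattice O(O(X)) of Scott-open subsets of the frame O(X). -/
open Set Topology

/-!
Scott-openness of `φ(𝒦)` is compactness of `𝒦` tested on the directed cover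
`◇(⋃ d) = ⋃_{U ∈ d} ◇U`. Compactness of `ψ(ℋ)` follows from Alexander's subbasis theorem: if
`ψ(ℋ) ⊆ ⋃ᵢ ◇Uᵢ`, the closed set `(⋃ᵢ Uᵢ)ᶜ` lies outside `ψ(ℋ)`, so `⋃ᵢ Uᵢ ∈ ℋ`, and
Scott-openness yields a finite subunion in `ℋ`. Both round trips go through complements: if
`A ∈ ψ(φ(𝒦))` then `Aᶜ ∉ φ(𝒦)`, so `A` contains some `B ∈ 𝒦`, and `𝒦` is saturated for the
specialization order of `A(X)`, which is inclusion; if `U ∉ ℋ` then `Uᶜ ∈ ψ(ℋ)` because `ℋ` is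
an upper set.
-/

namespace OpensT

variable {X : Type*} [TopologicalSpace X]

def sUnion (S : Set (OpensT X)) : OpensT X := ⟨⋃ U ∈ S, U.1, isOpen_biUnion fun U _ => U.2⟩

lemma isLUB_sUnion (S : Set (OpensT X)) : IsLUB S (sUnion S) :=
  ⟨fun _ hU => subset_biUnion_of_mem (u := fun U : OpensT X => U.1) hU,
    fun _ hb => iUnion₂_subset fun _ hU => hb hU⟩

lemma eq_sUnion_of_isLUB {S : Set (OpensT X)} {a : OpensT X} (h : IsLUB S a) : a = sUnion S :=
  h.unique (isLUB_sUnion S)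

lemma sUnion_mono {S T : Set (OpensT X)} (h : S ⊆ T) : sUnion S ≤ sUnion T :=
  biUnion_subset_biUnion_left h

end OpensT

lemma IsScottOpen.exists_finset_sUnion_mem {X : Type*} [TopologicalSpace X]
    {H : Set (OpensT X)} (hH : IsScottOpen H) {S : Set (OpensT X)} (hS : OpensT.sUnion S ∈ H) :
    ∃ T : Finset (OpensT X), ↑T ⊆ S ∧ OpensT.sUnion (T : Set (OpensT X)) ∈ H := by
  classical
  let d := (fun T : Finset (OpensT X) => OpensT.sUnion (T : Set (OpensT X))) '' {T | ↑T ⊆ S}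
  have hd : d.Nonempty := ⟨_, ∅, by simp, rfl⟩
  have hdir : DirectedOn (· ≤ ·) d := by
    rintro _ ⟨T, hT, rfl⟩ _ ⟨T', hT', rfl⟩
    refine ⟨_, ⟨T ∪ T', ?_, rfl⟩, OpensT.sUnion_mono ?_, OpensT.sUnion_mono ?_⟩
    · simpa using union_subset hT hT'
    all_goals simp
  have hlub : IsLUB d (OpensT.sUnion S) := by
    refine ⟨?_, fun b hb => (OpensT.isLUB_sUnion S).2 fun U hU => ?_⟩
    · rintro _ ⟨T, hT, rfl⟩
      exact OpensT.sUnion_mono hT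
    · have hU_le : U ≤ OpensT.sUnion ({U} : Finset (OpensT X)) :=
        (OpensT.isLUB_sUnion _).1 (by simp)
      exact hU_le.trans (hb ⟨{U}, by simpa using hU, rfl⟩)
  obtain ⟨_, ⟨T, hT, rfl⟩, hTH⟩ := hH.2 d hd hdir _ hlub hS
  exact ⟨T, hT, hTH⟩

namespace LowerPS

variable {X : Type*} [TopologicalSpace X]

def diamond (U : Set X) : Set (LowerPS X) := {A | (A.1 ∩ U).Nonempty}

lemma isOpen_diamond {U : Set X} (hU : IsOpen U) : IsOpen (diamond U) :=
  TopologicalSpace.isOpen_generateFrom_of_mem ⟨U, hU, rfl⟩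

lemma diamond_mono : Monotone (diamond : Set X → Set (LowerPS X)) :=
  fun _ _ hUV _ ⟨x, hxA, hxU⟩ => ⟨x, hxA, hUV hxU⟩

lemma diamond_sUnion (S : Set (OpensT X)) :
    diamond (OpensT.sUnion S).1 = ⋃ U ∈ S, diamond U.1 := by
  ext A
  simp [diamond, OpensT.sUnion, inter_iUnion₂, nonempty_iUnion]

lemma specializes_of_subset {A B : LowerPS X} (h : A.1 ⊆ B.1) : B ⤳ A := by
  rw [specializes_iff_nhds]
  erw [TopologicalSpace.nhds_generateFrom (a := A)]
  refine le_iInf₂ fun s hs => ?_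
  obtain ⟨hAs, U, hU, rfl⟩ := hs
  exact Filter.le_principal_iff.2
    ((isOpen_diamond hU).mem_nhds (hAs.mono (inter_subset_inter_left U h)))

end LowerPS

lemma UpperPS.mem_of_specializes {Y : Type*} [TopologicalSpace Y] (K : UpperPS Y) {x y : Y}
    (hx : x ∈ K.1) (h : y ⤳ x) : y ∈ K.1 := by
  rw [K.2.2]
  exact fun U ⟨hU, hKU⟩ => h.mem_open hU (hKU hx)

section PhiPsi

variable {X : Type*} [TopologicalSpace X]

open LowerPS

def phiSet (𝒦 : Set (LowerPS X)) : Set (OpensT X) := {U | 𝒦 ⊆ diamond U.1}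

def psiSet (H : Set (OpensT X)) : Set (LowerPS X) := ⋂ U ∈ H, diamond U.1

lemma isScottOpen_phiSet {𝒦 : Set (LowerPS X)} (h𝒦 : IsCompact 𝒦) :
    IsScottOpen (phiSet 𝒦) := by
  refine ⟨fun U V hUV hU => hU.trans (diamond_mono hUV), fun d hd hdir a ha haK => ?_⟩
  rw [phiSet, mem_ofPred_eq, OpensT.eq_sUnion_of_isLUB ha, diamond_sUnion,
    biUnion_eq_iUnion] at haK
  have : Nonempty d := hd.to_subtype
  obtain ⟨⟨U, hUd⟩, hU⟩ := h𝒦.elim_directed_cover _ (fun U => isOpen_diamond U.1.2) haK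
    (hdir.directed_val.mono_comp _ (g := fun U : OpensT X => diamond U.1)
      fun _ _ h => diamond_mono h)
  exact ⟨U, hUd, hU⟩

lemma compl_mem_psiSet {H : Set (OpensT X)} (hH : IsUpperSet H) {U : OpensT X} (hU : U ∉ H) :
    (⟨U.1ᶜ, U.2.isClosed_compl⟩ : LowerPS X) ∈ psiSet H := by
  refine mem_iInter₂.2 fun V hV => ?_
  show (U.1ᶜ ∩ V.1).Nonempty
  rw [inter_comm, inter_compl_nonempty_iff]
  exact fun hVU => hU (hH hVU hV)

lemma psiSet_eq_sInter_isOpen_supersets (H : Set (OpensT X)) :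
    psiSet H = ⋂₀ {W | IsOpen W ∧ psiSet H ⊆ W} :=
  Subset.antisymm (fun _ hA _ hW => hW.2 hA) <| subset_iInter₂ fun U hU =>
    sInter_subset_of_mem ⟨isOpen_diamond U.2, biInter_subset_of_mem hU⟩

lemma isCompact_psiSet {H : Set (OpensT X)} (hH : IsScottOpen H) : IsCompact (psiSet H) := by
  refine isCompact_generateFrom rfl fun P hP hcover => ?_
  let u : Set (OpensT X) := {U | diamond U.1 ∈ P}
  have hu : OpensT.sUnion u ∈ H := by
    by_contra hu
    obtain ⟨_, hsP, hs⟩ := mem_sUnion.1 (hcover (compl_mem_psiSet hH.1 hu))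
    obtain ⟨U, hU, rfl⟩ := hP hsP
    obtain ⟨x, hxu, hxU⟩ := hs
    exact hxu (mem_biUnion (show ⟨U, hU⟩ ∈ u from hsP) hxU)
  obtain ⟨T, hTu, hTH⟩ := hH.exists_finset_sUnion_mem hu
  refine ⟨(fun U : OpensT X => diamond U.1) '' T, image_subset_iff.2 hTu, T.finite_toSet.image _,
    fun A hA => ?_⟩
  rw [sUnion_image, ← diamond_sUnion]
  exact mem_iInter₂.1 hA _ hTH

lemma psiSet_phiSet (𝒦 : UpperPS (LowerPS X)) : psiSet (phiSet 𝒦.1) = 𝒦.1 := by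
  refine Subset.antisymm (fun A hA => ?_) fun A hA => mem_iInter₂.2 fun U hU => hU hA
  have hAc : (⟨A.1ᶜ, A.2.isOpen_compl⟩ : OpensT X) ∉ phiSet 𝒦.1 := fun h =>
    let ⟨_, hx, hxc⟩ := mem_iInter₂.1 hA _ h; hxc hx
  obtain ⟨B, hB, hBA⟩ : ∃ B ∈ 𝒦.1, B.1 ⊆ A.1 := by
    by_contra! hno
    exact hAc fun B hB => inter_compl_nonempty_iff.2 (hno B hB)
  exact 𝒦.mem_of_specializes hB (specializes_of_subset hBA)

lemma phiSet_psiSet {H : Set (OpensT X)} (hH : IsScottOpen H) : phiSet (psiSet H) = H := by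
  refine Subset.antisymm (fun U hU => ?_) fun U hU A hA => mem_iInter₂.1 hA U hU
  by_contra hUH
  obtain ⟨x, hxc, hx⟩ := hU (compl_mem_psiSet hH.1 hUH)
  exact hxc hx

lemma phiSet_subset_phiSet_iff {𝒦 𝒦' : UpperPS (LowerPS X)} :
    phiSet 𝒦.1 ⊆ phiSet 𝒦'.1 ↔ 𝒦'.1 ⊆ 𝒦.1 := by
  refine ⟨fun h => ?_, fun h U hU => h.trans hU⟩
  rw [← psiSet_phiSet 𝒦, ← psiSet_phiSet 𝒦']
  exact biInter_mono h fun _ _ => subset_rfl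

def phi (𝒦 : UpperPS (LowerPS X)) : {H : Set (OpensT X) // IsScottOpen H} :=
  ⟨phiSet 𝒦.1, isScottOpen_phiSet 𝒦.2.1⟩

def psi (ℋ : {H : Set (OpensT X) // IsScottOpen H}) : UpperPS (LowerPS X) :=
  ⟨psiSet ℋ.1, isCompact_psiSet ℋ.2, psiSet_eq_sInter_isOpen_supersets ℋ.1⟩

end PhiPsi

/-- `φ(𝒦) = {U open | every A ∈ 𝒦 meets U}` and `ψ(ℋ) = ⋂_{U ∈ ℋ} ◇U` are mutually
inverse order isomorphisms between `K(A(X))` ordered by reverse inclusion and the lattice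
of Scott-open subsets of `O(X)`. -/
theorem phi_psi_order_iso (X : Type*) [TopologicalSpace X] :
    ∃ (φ : UpperPS (LowerPS X) → {H : Set (OpensT X) // IsScottOpen H})
      (ψ : {H : Set (OpensT X) // IsScottOpen H} → UpperPS (LowerPS X)),
      (∀ 𝒦, (φ 𝒦).1 =
          {U : OpensT X | ∀ A ∈ 𝒦.1, ((A : LowerPS X).1 ∩ U.1).Nonempty}) ∧
      (∀ ℋ, (ψ ℋ).1 =
          {A : LowerPS X | ∀ U ∈ ℋ.1, (A.1 ∩ (U : OpensT X).1).Nonempty}) ∧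
      (∀ 𝒦, ψ (φ 𝒦) = 𝒦) ∧ (∀ ℋ, φ (ψ ℋ) = ℋ) ∧
      (∀ 𝒦 𝒦', 𝒦'.1 ⊆ 𝒦.1 ↔ (φ 𝒦).1 ⊆ (φ 𝒦').1) := by
  exact ⟨phi, psi, fun _ => rfl, fun _ => Set.ext fun _ => mem_iInter₂,
    fun 𝒦 => Subtype.ext (psiSet_phiSet 𝒦), fun ℋ => Subtype.ext (phiSet_psiSet ℋ.2),
    fun _ _ => phiSet_subset_phiSet_iff.symm⟩
end
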